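/- A Hom-algebra (A,μ,α) is Hom-associative (as_A = 0) if and only if it is both Hom-alternative and Hom-Lie-admissible (i.e., its commutator Hom-algebra (A,[x,y]=xy−yx,α) satisfies J_{A⁻} = 0). -/
import Mathlib


variable {K A : Type*} [Field K] [CharZero K] [AddCommGroup A] [Module K A]

/-- Hom-associator of a multiplication μ with twisting map α. -/
def homAs (μ : A →ₗ[K] A →ₗ[K] A) (α : A →ₗ[K] A) (x y z : A) : A :=
  μ (μ x y) (α z) - μ (α x) (μ y z)

theorem stmt18 (μ : A →ₗ[K] A →ₗ[K] A) (α : A →ₗ[K] A)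
    (hmult : ∀ x y : A, α (μ x y) = μ (α x) (α y)) :
    (∀ x y z : A, homAs μ α x y z = 0)
    ↔
    ((∀ x y : A, homAs μ α x x y = 0) ∧
     (∀ x y : A, homAs μ α x y y = 0) ∧
     (∀ x y : A, homAs μ α x y x = 0) ∧
     (∀ x y z : A,
        (μ (μ x y - μ y x) (α z) - μ (α z) (μ x y - μ y x))
          + (μ (μ z x - μ x z) (α y) - μ (α y) (μ z x - μ x z))
          + (μ (μ y z - μ z y) (α x) - μ (α x) (μ y z - μ z y)) = 0)) := by
  have Jeq : ∀ x y z : A,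
      (μ (μ x y - μ y x) (α z) - μ (α z) (μ x y - μ y x))
        + (μ (μ z x - μ x z) (α y) - μ (α y) (μ z x - μ x z))
        + (μ (μ y z - μ z y) (α x) - μ (α x) (μ y z - μ z y))
      = homAs μ α x y z + homAs μ α y z x + homAs μ α z x y
        - homAs μ α y x z - homAs μ α x z y - homAs μ α z y x := by
    intro x y z
    simp only [homAs, map_sub, LinearMap.sub_apply]
    abel
  constructor
  · intro h
    refine ⟨fun x y => h x x y, fun x y => h x y y, fun x y => h x y x, fun x y z => ?_⟩
    rw [Jeq, h, h, h, h, h, h]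
    abel
  · rintro ⟨h1, h2, _h3, hJ⟩
    have swap12 : ∀ a b c : A, homAs μ α a b c = - homAs μ α b a c := by
      intro a b c
      have key : homAs μ α a b c + homAs μ α b a c
          = homAs μ α (a + b) (a + b) c - homAs μ α a a c - homAs μ α b b c := by
        simp only [homAs, map_add, LinearMap.add_apply]
        abel
      rw [h1, h1, h1] at key
      rw [eq_neg_iff_add_eq_zero, key]
      abel
    have swap23 : ∀ a b c : A, homAs μ α a b c = - homAs μ α a c b := by
      intro a b c
      have key : homAs μ α a b c + homAs μ α a c b
          = homAs μ α a (b + c) (b + c) - homAs μ α a b b - homAs μ α a c c := by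
        simp only [homAs, map_add, LinearMap.add_apply]
        abel
      rw [h2, h2, h2] at key
      rw [eq_neg_iff_add_eq_zero, key]
      abel
    intro x y z
    have hzxy : homAs μ α z x y = homAs μ α x y z := by
      rw [swap12 z x y, swap23 x z y]; abel
    have hyzx : homAs μ α y z x = homAs μ α x y z := by
      rw [swap12 y z x, swap23 z y x, hzxy]; abel
    have hyxz : homAs μ α y x z = - homAs μ α x y z := by
      rw [swap12 y x z]
    have hxzy : homAs μ α x z y = - homAs μ α x y z := by
      rw [swap23 x y z]; abel
    have hzyx : homAs μ α z y x = - homAs μ α x y z := by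
      rw [swap12 z y x, hyzx]
    have six : (6 : K) • homAs μ α x y z = 0 := by
      have hJ' := hJ x y z
      rw [Jeq x y z, hyzx, hzxy, hyxz, hxzy, hzyx] at hJ'
      have : homAs μ α x y z + homAs μ α x y z + homAs μ α x y z
          - -homAs μ α x y z - -homAs μ α x y z - -homAs μ α x y z
          = (6 : ℕ) • homAs μ α x y z := by
        abel
      rw [this] at hJ'
      rw [show ((6 : K) = ((6 : ℕ) : K)) by norm_num, Nat.cast_smul_eq_nsmul]
      exact hJ'
    have h6 : (6 : K) ≠ 0 := by norm_num
    rcases smul_eq_zero.mp six with h | h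
    · exact absurd h h6
    · exact h
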